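/- Let d ≥ r ≥ 0 be integers, set w := r·2^{r-1} + Σ_{j=1}^{r-1} C(d-j-1, r-j)·j·2^{j-1}, and let X be a linear subspace of ℝ^d of dimension d − r such that every nonzero x ∈ X satisfies |supp(x)| ≥ r + 1. Then there exist a spanning subgraph F of Q_d and a collection of vectors {f_e : e ∈ E(Q_d)} ⊆ ℝ^w such that: (Q1) F is weakly (Q_d, S_{r+1})-saturated and |E(F)| = w; (Q2) Σ_{i=1}^d x_i f_{e(v,i)} = 0 for every vertex v of Q_d and every x ∈ X; and (Q3) span{f_e : e ∈ E(Q_d)} = ℝ^w. -/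

import Mathlib

open Finset

/-- One step of the `r`-neighbour bootstrap process on `G`: infected vertices stay infected,
and a vertex with at least `r` infected neighbours becomes infected. -/
def bootstrapStep {V : Type*} (G : SimpleGraph V) (r : ℕ) (A : Set V) : Set V :=
  A ∪ {v | r ≤ (G.neighborSet v ∩ A).ncard}

/-- `A` percolates under the `r`-neighbour bootstrap process on `G`. -/
def Percolates {V : Type*} (G : SimpleGraph V) (r : ℕ) (A : Set V) : Prop :=
  ∃ n, (bootstrapStep G r)^[n] A = Set.univ

/-- `m(G,r)`: the minimum cardinality of a percolating set. -/
noncomputable def minPerc {V : Type*} (G : SimpleGraph V) (r : ℕ) : ℕ :=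
  sInf {n | ∃ A : Set V, Percolates G r A ∧ A.ncard = n}

/-- The `d`-dimensional hypercube `Q_d`. -/
def cube (d : ℕ) : SimpleGraph (Fin d → Bool) where
  Adj x y := ∃ i, x i ≠ y i ∧ ∀ j, j ≠ i → x j = y j
  symm := ⟨fun x y ⟨i, h1, h2⟩ => ⟨i, h1.symm, fun j hj => (h2 j hj).symm⟩⟩
  loopless := ⟨fun x ⟨i, h1, _⟩ => h1 rfl⟩

/-- The grid `∏ [a i]`. -/
def gridGraph {d : ℕ} (a : Fin d → ℕ) : SimpleGraph (∀ i, Fin (a i)) where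
  Adj x y := ∃ i, (((x i : ℕ) + 1 = (y i : ℕ)) ∨ ((y i : ℕ) + 1 = (x i : ℕ))) ∧
    ∀ j, j ≠ i → x j = y j
  symm := ⟨fun x y ⟨i, h1, h2⟩ => ⟨i, h1.symm, fun j hj => (h2 j hj).symm⟩⟩
  loopless := ⟨fun x ⟨i, h1, _⟩ => by rcases h1 with h | h <;> omega⟩

/-- The star with `n` leaves, `K_{1,n}`; vertex `0` is the centre. -/
def starGraph (n : ℕ) : SimpleGraph (Fin (n + 1)) where
  Adj x y := (x = 0 ∧ y ≠ 0) ∨ (y = 0 ∧ x ≠ 0)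
  symm := ⟨fun x y h => h.symm⟩
  loopless := ⟨fun x h => by rcases h with ⟨h1, h2⟩ | ⟨h1, h2⟩ <;> exact h2 h1⟩

/-- The edge `e` completes a copy of `H` in `G'`. -/
def CompletesCopy {V W : Type*} (H : SimpleGraph W) (G' : SimpleGraph V) (e : Sym2 V) : Prop :=
  ∃ φ : W → V, Function.Injective φ ∧ (∀ a b, H.Adj a b → G'.Adj (φ a) (φ b)) ∧
    ∃ a b, H.Adj a b ∧ e = s(φ a, φ b)

/-- `F` is weakly `(G,H)`-saturated. -/
def WeaklySaturated {V W : Type*} (G : SimpleGraph V) (H : SimpleGraph W)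
    (F : SimpleGraph V) : Prop :=
  F ≤ G ∧ ∃ (n : ℕ) (e : Fin n → Sym2 V), Function.Injective e ∧
    G.edgeSet \ F.edgeSet = Set.range e ∧
    ∀ i : Fin n, CompletesCopy H
      (SimpleGraph.fromEdgeSet (F.edgeSet ∪ e '' {j | j ≤ i})) (e i)

/-- `wsat(G,H)`: the minimum number of edges of a weakly `(G,H)`-saturated graph. -/
noncomputable def wsat {V W : Type*} (G : SimpleGraph V) (H : SimpleGraph W) : ℕ :=
  sInf {m | ∃ F : SimpleGraph V, WeaklySaturated G H F ∧ F.edgeSet.ncard = m}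

/-- `e(v,i)`: the unique edge of `Q_d` in direction `i` incident to `v`. -/
def cubeEdge {d : ℕ} (v : Fin d → Bool) (i : Fin d) : Sym2 (Fin d → Bool) :=
  s(v, Function.update v i (!v i))

/-!
`F` is built recursively along `Q_{d+1} = Q_d □ K_2`: a weakly `S_{r+1}`-saturated graph for
`(d, r)` on the bottom layer and a weakly `S_r`-saturated graph for `(d, r - 1)` on the top layer.
First saturate the bottom layer; then every rung completes a star centred at its bottom end (`r`
bottom neighbours plus the rung); finally each top vertex has its rung as an extra neighbour, so
the `S_r`-process of the top layer runs as an `S_{r+1}`-process. The edge counts satisfy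
`w(d+1, r) = w(d, r) + w(d, r-1)`, solved by `∑_{S ⊆ [d]} (r - |S|)₊`.

The coordinates of `ℝ^w` are indexed by pairs `(S, k)` with `S ⊆ [d]` and `k < r - |S|`. Since
`X^⊥` has dimension `r`, for each `S` there are `r - |S|` independent vectors `y_{S,k} ⊥ X`
vanishing on `S`; put `f_{e(v,i)}(S, k) = χ_S(v) y_{S,k}(i)` with the Walsh character `χ_S`.
Orthogonality to `X` gives (Q2). The Walsh characters are orthogonal, hence independent, so the
coordinate functions `(v, i) ↦ χ_S(v) y_{S,k}(i)` are independent, which is (Q3).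
-/

open SimpleGraph hiding starGraph
open Function Module

lemma Fin.snoc_image_setOf_le_castSucc {α : Type*} {n : ℕ} (e : Fin n → α) (a : α) (i : Fin n) :
    Fin.snoc e a '' {j | j ≤ i.castSucc} = e '' {j | j ≤ i} := by
  ext x
  constructor
  · rintro ⟨j, hj, rfl⟩
    induction j using Fin.lastCases with
    | last => exact absurd hj (not_le.2 (Fin.castSucc_lt_last i))
    | cast j => exact ⟨j, Fin.castSucc_le_castSucc_iff.1 hj, by simp⟩
  · rintro ⟨j, hj, rfl⟩
    exact ⟨j.castSucc, Fin.castSucc_le_castSucc_iff.2 hj, by simp⟩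

section Saturation

variable {V U : Type*} {H : SimpleGraph U}

def SaturationStep (H : SimpleGraph U) (G₁ G₂ : SimpleGraph V) : Prop :=
  ∃ e, e ∉ G₁.edgeSet ∧ G₂ = G₁ ⊔ fromEdgeSet {e} ∧ CompletesCopy H G₂ e

lemma CompletesCopy.mono {G₁ G₂ : SimpleGraph V} {e : Sym2 V} (h : G₁ ≤ G₂)
    (hc : CompletesCopy H G₁ e) : CompletesCopy H G₂ e := by
  obtain ⟨φ, hφ, hom, a, b, hab, rfl⟩ := hc
  exact ⟨φ, hφ, fun a b hab => h (hom a b hab), a, b, hab, rfl⟩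

lemma CompletesCopy.not_isDiag {G : SimpleGraph V} {e : Sym2 V} (hc : CompletesCopy H G e) :
    ¬ e.IsDiag := by
  obtain ⟨φ, -, hom, a, b, hab, rfl⟩ := hc
  simpa using (hom a b hab).ne

lemma weaklySaturated_self (F : SimpleGraph V) : WeaklySaturated F H F :=
  ⟨le_rfl, 0, Fin.elim0, fun i => i.elim0, by simp, fun i => i.elim0⟩

lemma WeaklySaturated.of_saturationStep {F G₁ G₂ : SimpleGraph V} (h : WeaklySaturated G₁ H F)
    (hs : SaturationStep H G₁ G₂) : WeaklySaturated G₂ H F := by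
  obtain ⟨hF, n, e, he, hrange, hcopy⟩ := h
  obtain ⟨a, ha, rfl, ha_copy⟩ := hs
  have hG₁ : F.edgeSet ∪ Set.range e = G₁.edgeSet := by
    rw [← hrange, Set.union_sdiff_self, Set.union_eq_right.2 (edgeSet_mono hF)]
  refine ⟨hF.trans le_sup_left, n + 1, Fin.snoc e a,
    Fin.snoc_injective_iff.2 ⟨he, fun h => ha (hrange.symm.subset h).1⟩, ?_, fun i => ?_⟩
  · have haF : a ∉ F.edgeSet := fun h => ha (edgeSet_mono hF h)
    have ha_diag := ha_copy.not_isDiag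
    rw [Fin.range_snoc, ← hrange, edgeSet_sup, edgeSet_fromEdgeSet]
    ext x
    simp only [Set.mem_sdiff, Set.mem_union, Set.mem_singleton_iff, Set.mem_insert_iff,
      Sym2.mem_diagSet]
    constructor
    · rintro ⟨hx | ⟨rfl, -⟩, hxF⟩ <;> tauto
    · rintro (rfl | hx) <;> tauto
  · induction i using Fin.lastCases with
    | last =>
      have hall : {j : Fin (n + 1) | j ≤ Fin.last n} = Set.univ := Set.eq_univ_of_forall Fin.le_last
      rwa [hall, Set.image_univ, Fin.range_snoc, Fin.snoc_last, Set.insert_eq,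
        Set.union_left_comm, hG₁, fromEdgeSet_union, fromEdgeSet_edgeSet, sup_comm]
    | cast i =>
      rw [Fin.snoc_image_setOf_le_castSucc, Fin.snoc_castSucc]
      exact hcopy i

theorem weaklySaturated_of_reflTransGen {F G : SimpleGraph V}
    (h : Relation.ReflTransGen (SaturationStep H) F G) : WeaklySaturated G H F := by
  induction h with
  | refl => exact weaklySaturated_self F
  | tail _ hs ih => exact ih.of_saturationStep hs

lemma reflTransGen_saturationStep_sup {G : SimpleGraph V} {s : Set (Sym2 V)} (hs : s.Finite)
    (h : ∀ e ∈ s, CompletesCopy H (G ⊔ fromEdgeSet {e}) e) :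
    Relation.ReflTransGen (SaturationStep H) G (G ⊔ fromEdgeSet s) := by
  induction s, hs using Set.Finite.induction_on with
  | empty => rw [fromEdgeSet_empty, sup_bot_eq]
  | @insert a s ha hs ih =>
    have hsplit : G ⊔ fromEdgeSet (insert a s) = (G ⊔ fromEdgeSet s) ⊔ fromEdgeSet {a} := by
      rw [Set.insert_eq, fromEdgeSet_union, sup_comm (fromEdgeSet {a}), sup_assoc]
    refine (ih fun e he => h e (Set.mem_insert_of_mem a he)).trans ?_
    rw [hsplit]
    by_cases hmem : a ∈ (G ⊔ fromEdgeSet s).edgeSet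
    · have hle : fromEdgeSet {a} ≤ G ⊔ fromEdgeSet s :=
        (fromEdgeSet_le _).2 fun x ⟨hx, _⟩ => Set.mem_singleton_iff.1 hx ▸ hmem
      rw [sup_eq_left.2 hle]
    · refine Relation.ReflTransGen.single ⟨a, hmem, rfl, ?_⟩
      refine (h a (Set.mem_insert a s)).mono ?_
      exact sup_le_sup_right le_sup_left _

lemma completesCopy_starGraph_iff {n : ℕ} {G : SimpleGraph V} {e : Sym2 V} :
    CompletesCopy (starGraph n) G e ↔
      ∃ (u : V) (φ : Fin n → V), Injective φ ∧ (∀ k, G.Adj u (φ k)) ∧ ∃ k, e = s(u, φ k) := by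
  constructor
  · rintro ⟨ψ, hψ, hom, a, b, hab, rfl⟩
    refine ⟨ψ 0, ψ ∘ Fin.succ, hψ.comp (Fin.succ_injective _),
      fun k => hom _ _ (Or.inl ⟨rfl, Fin.succ_ne_zero k⟩), ?_⟩
    rcases hab with ⟨rfl, hb⟩ | ⟨rfl, ha⟩
    · obtain ⟨k, rfl⟩ := Fin.exists_succ_eq.2 hb
      exact ⟨k, rfl⟩
    · obtain ⟨k, rfl⟩ := Fin.exists_succ_eq.2 ha
      exact ⟨k, Sym2.eq_swap⟩
  · rintro ⟨u, φ, hφ, hadj, k, rfl⟩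
    have hstar : ∀ q : Fin (n + 1), q ≠ 0 → G.Adj u ((Fin.cons u φ : Fin (n + 1) → V) q) := by
      intro q hq
      obtain ⟨k, rfl⟩ := Fin.exists_succ_eq.2 hq
      simpa using hadj k
    refine ⟨Fin.cons u φ, Fin.cons_injective_iff.2 ⟨?_, hφ⟩, ?_, 0, k.succ,
      Or.inl ⟨rfl, Fin.succ_ne_zero k⟩, by simp⟩
    · rintro ⟨k, hk⟩
      exact (hadj k).ne hk.symm
    · rintro a b (⟨rfl, hb⟩ | ⟨rfl, ha⟩)
      · exact hstar b hb
      · exact (hstar a ha).symm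

lemma completesCopy_starGraph_one {G : SimpleGraph V} {u v : V} (h : G.Adj u v) :
    CompletesCopy (starGraph 1) G s(u, v) :=
  completesCopy_starGraph_iff.2
    ⟨u, ![v], injective_of_subsingleton _, Fin.forall_fin_one.2 h, 0, rfl⟩

lemma map_sup_fromEdgeSet_singleton {W : Type*} (ι : V ↪ W) (G : SimpleGraph V) {e : Sym2 V}
    (he : ¬ e.IsDiag) :
    (G ⊔ fromEdgeSet {e}).map ι = G.map ι ⊔ fromEdgeSet {ι.sym2Map e} := by
  rw [← edgeSet_inj]
  simp only [edgeSet_map, edgeSet_sup, edgeSet_fromEdgeSet, Set.image_union]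
  have he' : ¬ (ι.sym2Map e).IsDiag := by simpa [Sym2.isDiag_map ι.injective] using he
  rw [show ({e} : Set (Sym2 V)) \ Sym2.diagSet = {e} by simpa using he,
    show ({ι.sym2Map e} : Set (Sym2 W)) \ Sym2.diagSet = {ι.sym2Map e} by simpa using he',
    Set.image_singleton]

lemma SaturationStep.lift {W U' : Type*} {H' : SimpleGraph U'} (ι : V ↪ W) (C : SimpleGraph W)
    (hC : ∀ a b, ¬ C.Adj (ι a) (ι b))
    (hH : ∀ (G : SimpleGraph V) e, CompletesCopy H G e →
      CompletesCopy H' (C ⊔ G.map ι) (ι.sym2Map e))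
    {G₁ G₂ : SimpleGraph V} (h : SaturationStep H G₁ G₂) :
    SaturationStep H' (C ⊔ G₁.map ι) (C ⊔ G₂.map ι) := by
  obtain ⟨e, he, rfl, hcopy⟩ := h
  refine ⟨ι.sym2Map e, ?_, ?_, hH _ _ hcopy⟩
  · rw [edgeSet_sup, edgeSet_map]
    rintro (hC' | ⟨e', he', hee'⟩)
    · induction e using Sym2.ind with
      | _ a b => exact hC a b hC'
    · exact he (ι.sym2Map.injective hee' ▸ he')
  · rw [map_sup_fromEdgeSet_singleton ι _ hcopy.not_isDiag, sup_assoc]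

lemma reflTransGen_saturationStep_lift {W U' : Type*} {H' : SimpleGraph U'} (ι : V ↪ W)
    (C : SimpleGraph W) (hC : ∀ a b, ¬ C.Adj (ι a) (ι b))
    (hH : ∀ (G : SimpleGraph V) e, CompletesCopy H G e →
      CompletesCopy H' (C ⊔ G.map ι) (ι.sym2Map e))
    {G₁ G₂ : SimpleGraph V} (h : Relation.ReflTransGen (SaturationStep H) G₁ G₂) :
    Relation.ReflTransGen (SaturationStep H') (C ⊔ G₁.map ι) (C ⊔ G₂.map ι) :=
  Relation.ReflTransGen.lift (fun G : SimpleGraph V => C ⊔ G.map ι)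
    (fun _ _ => SaturationStep.lift ι C hC hH) _ _ h

lemma completesCopy_map {W : Type*} (ι : V ↪ W) (C : SimpleGraph W) {G : SimpleGraph V}
    {e : Sym2 V} (h : CompletesCopy H G e) : CompletesCopy H (C ⊔ G.map ι) (ι.sym2Map e) := by
  obtain ⟨φ, hφ, hom, a, b, hab, rfl⟩ := h
  exact ⟨ι ∘ φ, ι.injective.comp hφ,
    fun a b hab => Or.inr ((map_adj_apply (f := ι)).2 (hom a b hab)), a, b, hab, rfl⟩

lemma completesCopy_starGraph_succ_map {W : Type*} (ι : V ↪ W) (C : SimpleGraph W)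
    (β : V → W) (hβ : ∀ v, C.Adj (ι v) (β v)) (hβι : ∀ v w, β v ≠ ι w) {n : ℕ}
    {G : SimpleGraph V} {e : Sym2 V} (h : CompletesCopy (starGraph n) G e) :
    CompletesCopy (starGraph (n + 1)) (C ⊔ G.map ι) (ι.sym2Map e) := by
  obtain ⟨u, φ, hφ, hadj, k, rfl⟩ := completesCopy_starGraph_iff.1 h
  have hleaves : ∀ q, (C ⊔ G.map ι).Adj (ι u) ((Fin.cons (β u) (ι ∘ φ) : Fin (n + 1) → W) q) :=
    Fin.cases (Or.inl (hβ u)) fun j => Or.inr ((map_adj_apply (f := ι)).2 (hadj j))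
  exact completesCopy_starGraph_iff.2 ⟨ι u, Fin.cons (β u) (ι ∘ φ),
    Fin.cons_injective_iff.2 ⟨fun ⟨j, hj⟩ => hβι u (φ j) hj.symm, ι.injective.comp hφ⟩,
    hleaves, k.succ, by simp⟩

lemma reflTransGen_saturationStep_starGraph_one_bot (G : SimpleGraph V) (hG : G.edgeSet.Finite) :
    Relation.ReflTransGen (SaturationStep (starGraph 1)) ⊥ G := by
  have h := reflTransGen_saturationStep_sup (H := starGraph 1) (G := ⊥) hG fun e he => ?_
  · rwa [bot_sup_eq, fromEdgeSet_edgeSet] at h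
  · induction e using Sym2.ind with
    | _ u v =>
      exact completesCopy_starGraph_one (by simpa [fromEdgeSet_adj] using (G.mem_edgeSet.1 he).ne)

end Saturation

section Cube

variable {d : ℕ}

lemma cube_adj_iff {v w : Fin d → Bool} : (cube d).Adj v w ↔ ∃ i, w = update v i (!v i) := by
  constructor
  · rintro ⟨i, hi, hrest⟩
    refine ⟨i, funext fun j => ?_⟩
    rcases eq_or_ne j i with rfl | hj
    · rw [update_self]
      revert hi
      cases v j <;> cases w j <;> simp
    · rw [update_of_ne hj, hrest j hj]
  · rintro ⟨i, rfl⟩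
    exact ⟨i, by simp, fun j hj => by rw [update_of_ne hj]⟩

lemma injective_update_not (v : Fin d → Bool) : Injective fun i => update v i (!v i) := by
  intro i j h
  by_contra hij
  simpa [update_of_ne hij] using congrFun h i

lemma cube_degree (v : Fin d → Bool) [DecidableRel (cube d).Adj] : (cube d).degree v = d := by
  have : (cube d).neighborFinset v = univ.image fun i => update v i (!v i) := by
    ext w
    simp [cube_adj_iff, eq_comm]
  rw [← card_neighborFinset_eq_degree, this, card_image_of_injective _ (injective_update_not v),
    card_univ, Fintype.card_fin]

lemma ncard_edgeSet_cube : (cube d).edgeSet.ncard = d * 2 ^ (d - 1) := by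
  classical
  have h := (cube d).sum_degrees_eq_twice_card_edges
  simp only [cube_degree, sum_const, card_univ, Fintype.card_fun, Fintype.card_bool,
    Fintype.card_fin, smul_eq_mul] at h
  rw [← coe_edgeFinset, Set.ncard_coe_finset]
  rcases d with _ | d
  · simpa using h
  · rw [pow_succ] at h
    simp only [Nat.add_sub_cancel]
    linarith

def cubeLayer (d : ℕ) (b : Bool) : (Fin d → Bool) ↪ (Fin (d + 1) → Bool) :=
  ⟨fun x => Fin.cons b x, Fin.cons_right_injective (α := fun _ => Bool) b⟩

def cubeRungs (d : ℕ) : SimpleGraph (Fin (d + 1) → Bool) where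
  Adj u v := u 0 ≠ v 0 ∧ Fin.tail u = Fin.tail v
  symm := ⟨fun _ _ h => ⟨h.1.symm, h.2.symm⟩⟩
  loopless := ⟨fun _ h => h.1 rfl⟩

@[simp]
lemma cubeLayer_apply (b : Bool) (x : Fin d → Bool) : cubeLayer d b x = Fin.cons b x := rfl

lemma cube_adj_cons {a b : Bool} {x y : Fin d → Bool} :
    (cube (d + 1)).Adj (Fin.cons a x) (Fin.cons b y) ↔
      (a = b ∧ (cube d).Adj x y) ∨ (a ≠ b ∧ x = y) := by
  simp only [cube_adj_iff, Fin.exists_fin_succ, Fin.cons_zero, Fin.cons_succ, Fin.update_cons_zero,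
    ← Fin.cons_update, Fin.cons_inj]
  cases a <;> cases b <;> simp [eq_comm]

lemma map_cubeLayer_adj_cons {G : SimpleGraph (Fin d → Bool)} {c a b : Bool}
    {x y : Fin d → Bool} :
    (G.map (cubeLayer d c)).Adj (Fin.cons a x) (Fin.cons b y) ↔ a = c ∧ b = c ∧ G.Adj x y := by
  simp only [map_adj, cubeLayer_apply, Fin.cons_inj]
  constructor
  · rintro ⟨x, y, h, ⟨rfl, rfl⟩, rfl, rfl⟩
    exact ⟨rfl, rfl, h⟩
  · rintro ⟨rfl, rfl, h⟩
    exact ⟨x, y, h, ⟨rfl, rfl⟩, rfl, rfl⟩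

@[simp]
lemma cubeRungs_adj_cons {a b : Bool} {x y : Fin d → Bool} :
    (cubeRungs d).Adj (Fin.cons a x) (Fin.cons b y) ↔ a ≠ b ∧ x = y := by
  simp [cubeRungs]

lemma cube_succ_eq :
    cube (d + 1) = (cube d).map (cubeLayer d false) ⊔ (cube d).map (cubeLayer d true) ⊔
      cubeRungs d := by
  ext u v
  obtain ⟨a, x, rfl⟩ := Fin.exists_cons u
  obtain ⟨b, y, rfl⟩ := Fin.exists_cons v
  simp only [sup_adj, cube_adj_cons, map_cubeLayer_adj_cons, cubeRungs_adj_cons]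
  cases a <;> cases b <;> simp

end Cube

-- `∑_{S ⊆ [d]} (r - |S|)₊`, grouped by `|S|`; the truncated subtraction is intended.
def deficitSum (d r : ℕ) : ℕ := ∑ s ∈ range (d + 1), d.choose s * (r - s)

-- The number `w` of the theorem, with its leading term `r 2^(r-1)` written as the summand `j = r`.
def starSatFormula (d r : ℕ) : ℕ :=
  ∑ j ∈ range (r + 1), (d - j - 1).choose (r - j) * j * 2 ^ (j - 1)

lemma card_sigma_fin_sub_card (d r : ℕ) :
    Fintype.card ((S : Finset (Fin d)) × Fin (r - #S)) = deficitSum d r := by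
  simp only [Fintype.card_sigma, Fintype.card_fin, ← powerset_univ, sum_powerset_apply_card,
    card_univ, smul_eq_mul, deficitSum]

lemma deficitSum_zero_right (d : ℕ) : deficitSum d 0 = 0 := by simp [deficitSum]

lemma deficitSum_succ (d r : ℕ) : deficitSum (d + 1) r = deficitSum d r + deficitSum d (r - 1) := by
  have htail : ∑ k ∈ range (d + 1), d.choose (k + 1) * (r - (k + 1)) + r = deficitSum d r := by
    rw [sum_range_succ, Nat.choose_succ_self, zero_mul, add_zero, deficitSum, sum_range_succ' _ d]
    simp
  rw [← htail, deficitSum, deficitSum, sum_range_succ']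
  simp only [Nat.choose_succ_succ, add_mul, sum_add_distrib, Nat.choose_zero_right,
    Nat.succ_eq_add_one, Nat.sub_sub, Nat.add_comm 1, Nat.sub_zero]
  ring

lemma deficitSum_self (d : ℕ) : deficitSum d d = d * 2 ^ (d - 1) := by
  rw [← Nat.sum_range_mul_choose, deficitSum, ← sum_range_reflect]
  refine sum_congr rfl fun j hj => ?_
  rw [mem_range] at hj
  rw [show d + 1 - 1 - j = d - j by omega, Nat.choose_symm (by omega),
    show d - (d - j) = j by omega, mul_comm]

lemma starSatFormula_zero_right (d : ℕ) : starSatFormula d 0 = 0 := by simp [starSatFormula]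

lemma starSatFormula_self (d : ℕ) : starSatFormula d d = d * 2 ^ (d - 1) := by
  rw [starSatFormula, sum_range_succ, sum_eq_zero fun j hj => ?_]
  · simp
  · rw [Nat.choose_eq_zero_of_lt (by simp at hj; omega)]
    simp

lemma starSatFormula_succ {d r : ℕ} (h : r + 1 ≤ d) :
    starSatFormula (d + 1) (r + 1) = starSatFormula d (r + 1) + starSatFormula d r := by
  have pascal : ∀ j ∈ range (r + 1), (d + 1 - j - 1).choose (r + 1 - j) =
      (d - j - 1).choose (r - j) + (d - j - 1).choose (r + 1 - j) := by
    intro j hj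
    rw [mem_range] at hj
    rw [show d + 1 - j - 1 = d - j - 1 + 1 by omega, show r + 1 - j = r - j + 1 by omega,
      Nat.choose_succ_succ]
  simp only [starSatFormula, sum_range_succ _ (r + 1)]
  rw [sum_congr rfl fun j hj => by rw [pascal j hj]]
  simp only [add_mul, sum_add_distrib, Nat.sub_self, Nat.choose_zero_right]
  ring

lemma deficitSum_eq_starSatFormula {d r : ℕ} (h : r ≤ d) : deficitSum d r = starSatFormula d r := by
  induction d generalizing r with
  | zero =>
    obtain rfl : r = 0 := by omega
    rfl
  | succ d ih =>
    rcases r with _ | r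
    · rw [deficitSum_zero_right, starSatFormula_zero_right]
    rcases h.eq_or_lt with h' | hlt
    · obtain rfl : r = d := by omega
      rw [deficitSum_self, starSatFormula_self]
    · rw [deficitSum_succ, starSatFormula_succ (by omega), ih (by omega), Nat.add_sub_cancel,
        ih (by omega)]

lemma starSatFormula_eq (d r : ℕ) : starSatFormula d r =
    r * 2 ^ (r - 1) + ∑ j ∈ Icc 1 (r - 1), (d - j - 1).choose (r - j) * j * 2 ^ (j - 1) := by
  rcases r with _ | r
  · rfl
  rw [starSatFormula, sum_range_succ, sum_range_succ', Nat.add_sub_cancel,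
    ← Ico_add_one_right_eq_Icc, sum_Ico_eq_sum_range, Nat.add_sub_cancel]
  simp [add_comm]

section CubeSaturation

variable {d : ℕ}

lemma cubeEdge_mem_edgeSet (v : Fin d → Bool) (i : Fin d) : cubeEdge v i ∈ (cube d).edgeSet :=
  cube_adj_iff.2 ⟨i, rfl⟩

lemma ncard_edgeSet_map_cubeLayer_sup (G₁ G₂ : SimpleGraph (Fin d → Bool)) :
    (G₁.map (cubeLayer d false) ⊔ G₂.map (cubeLayer d true)).edgeSet.ncard =
      G₁.edgeSet.ncard + G₂.edgeSet.ncard := by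
  have hdisj :
      Disjoint (G₁.map (cubeLayer d false)).edgeSet (G₂.map (cubeLayer d true)).edgeSet := by
    rw [Set.disjoint_left]
    intro e h₁ h₂
    induction e using Sym2.ind with
    | _ u v =>
      obtain ⟨a, x, rfl⟩ := Fin.exists_cons u
      obtain ⟨b, y, rfl⟩ := Fin.exists_cons v
      rw [mem_edgeSet, map_cubeLayer_adj_cons] at h₁ h₂
      exact Bool.false_ne_true (h₁.1.symm.trans h₂.1)
  rw [edgeSet_sup, Set.ncard_union_eq hdisj, edgeSet_map, edgeSet_map,
    Set.ncard_image_of_injective _ (Embedding.injective _),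
    Set.ncard_image_of_injective _ (Embedding.injective _)]

lemma exists_eq_rung {e : Sym2 (Fin (d + 1) → Bool)} (he : e ∈ (cubeRungs d).edgeSet) :
    ∃ t, e = s(Fin.cons false t, Fin.cons true t) := by
  induction e using Sym2.ind with
  | _ u v =>
    obtain ⟨a, x, rfl⟩ := Fin.exists_cons u
    obtain ⟨b, y, rfl⟩ := Fin.exists_cons v
    obtain ⟨hab, rfl⟩ := cubeRungs_adj_cons.1 ((cubeRungs d).mem_edgeSet.1 he)
    cases a <;> cases b <;> simp at hab
    · exact ⟨x, rfl⟩
    · exact ⟨x, Sym2.eq_swap⟩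

lemma completesCopy_rung {r : ℕ} (hrd : r ≤ d) {G : SimpleGraph (Fin (d + 1) → Bool)}
    (hG : (cube d).map (cubeLayer d false) ≤ G) (t : Fin d → Bool) :
    CompletesCopy (starGraph (r + 1)) (G ⊔ fromEdgeSet {s(Fin.cons false t, Fin.cons true t)})
      s(Fin.cons false t, Fin.cons true t) := by
  -- the leaves are the top end of the rung and `r` cube neighbours of its bottom end
  let leaves : Fin (r + 1) → Fin (d + 1) → Bool := Fin.cons (Fin.cons true t) fun j =>
    Fin.cons false (update t (Fin.castLE hrd j) (!t (Fin.castLE hrd j)))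
  refine completesCopy_starGraph_iff.2
    ⟨Fin.cons false t, leaves, ?_, Fin.cases ?_ fun j => ?_, 0, rfl⟩
  · refine Fin.cons_injective_iff.2 ⟨fun ⟨j, hj⟩ => by simpa using congrFun hj 0, ?_⟩
    exact (Fin.cons_right_injective (α := fun _ => Bool) false).comp
      ((injective_update_not t).comp (Fin.castLE_injective hrd))
  · exact Or.inr ((fromEdgeSet_adj _).2 ⟨rfl, by simp [leaves]⟩)
  · exact Or.inl (hG (map_cubeLayer_adj_cons.2 ⟨rfl, rfl, cube_adj_iff.2 ⟨_, rfl⟩⟩))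

theorem reflTransGen_saturationStep_cube_succ {r : ℕ} (hrd : r ≤ d)
    {Fb Ft : SimpleGraph (Fin d → Bool)}
    (hb : Relation.ReflTransGen (SaturationStep (starGraph (r + 1))) Fb (cube d))
    (ht : Relation.ReflTransGen (SaturationStep (starGraph r)) Ft (cube d)) :
    Relation.ReflTransGen (SaturationStep (starGraph (r + 1)))
      (Fb.map (cubeLayer d false) ⊔ Ft.map (cubeLayer d true)) (cube (d + 1)) := by
  set B := (cube d).map (cubeLayer d false)
  have bottom := reflTransGen_saturationStep_lift (cubeLayer d false) (Ft.map (cubeLayer d true))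
    (fun a b h => by simp at h) (fun _ _ => completesCopy_map _ _) hb
  have rungs : Relation.ReflTransGen (SaturationStep (starGraph (r + 1)))
      (Ft.map (cubeLayer d true) ⊔ B) (Ft.map (cubeLayer d true) ⊔ B ⊔ cubeRungs d) := by
    have h := reflTransGen_saturationStep_sup (G := Ft.map (cubeLayer d true) ⊔ B)
      (Set.toFinite (cubeRungs d).edgeSet) fun e he => by
      obtain ⟨t, rfl⟩ := exists_eq_rung he
      exact completesCopy_rung hrd le_sup_right t
    rwa [fromEdgeSet_edgeSet] at h
  -- each top vertex gains its rung as an extra leaf, turning `S_r` into `S_{r+1}`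
  have top := reflTransGen_saturationStep_lift (cubeLayer d true) (B ⊔ cubeRungs d)
    (fun a b h => by simp [B] at h)
    (fun _ _ => completesCopy_starGraph_succ_map _ _ (cubeLayer d false)
      (fun v => Or.inr (by simp)) (fun v w => by simp)) ht
  have hmid : Ft.map (cubeLayer d true) ⊔ B ⊔ cubeRungs d =
      B ⊔ cubeRungs d ⊔ Ft.map (cubeLayer d true) := by ac_rfl
  have hend : cube (d + 1) = B ⊔ cubeRungs d ⊔ (cube d).map (cubeLayer d true) := by
    rw [cube_succ_eq]; simp only [B]; ac_rfl
  rw [hend, sup_comm]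
  exact (bottom.trans (hmid ▸ rungs)).trans top

theorem exists_reflTransGen_saturationStep_cube {r : ℕ} (hrd : r ≤ d) :
    ∃ F : SimpleGraph (Fin d → Bool),
      Relation.ReflTransGen (SaturationStep (starGraph (r + 1))) F (cube d) ∧
        F.edgeSet.ncard = deficitSum d r := by
  induction d generalizing r with
  | zero =>
    obtain rfl : r = 0 := by omega
    exact ⟨cube 0, .refl, by simp [ncard_edgeSet_cube, deficitSum]⟩
  | succ d ih =>
    rcases r with _ | r
    · exact ⟨⊥, reflTransGen_saturationStep_starGraph_one_bot _ (Set.toFinite _),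
        by simp [deficitSum_zero_right]⟩
    rcases hrd.eq_or_lt with h | h
    · obtain rfl : d = r := by omega
      exact ⟨cube (d + 1), .refl, by rw [ncard_edgeSet_cube, deficitSum_self]⟩
    obtain ⟨Fb, hb, hFb⟩ := ih (r := r + 1) (by omega)
    obtain ⟨Ft, ht, hFt⟩ := ih (r := r) (by omega)
    refine ⟨_, reflTransGen_saturationStep_cube_succ (by omega) hb ht, ?_⟩
    rw [ncard_edgeSet_map_cubeLayer_sup, hFb, hFt, deficitSum_succ, Nat.add_sub_cancel]

end CubeSaturation

section LinearAlgebra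

variable {K : Type*} [Field K]

lemma linearIndependent_sigma_mul {σ V I : Type*} [Fintype σ] {κ : σ → Type*}
    [∀ S, Fintype (κ S)] {χ : σ → V → K} (hχ : LinearIndependent K χ) {y : ∀ S, κ S → I → K}
    (hy : ∀ S, LinearIndependent K (y S)) :
    LinearIndependent K fun a : (S : σ) × κ S => fun p : V × I => χ a.1 p.1 * y a.1 a.2 p.2 := by
  rw [Fintype.linearIndependent_iff]
  intro c hc ⟨S, k⟩
  have hcoord : ∀ i, ∀ S, ∑ k, c ⟨S, k⟩ * y S k i = 0 := fun i =>
    Fintype.linearIndependent_iff.1 hχ _ <| funext fun v => by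
      have := congrFun hc (v, i)
      simp only [Finset.sum_apply, Pi.smul_apply, smul_eq_mul, ← univ_sigma_univ, sum_sigma,
        Pi.zero_apply] at this
      simp only [Finset.sum_apply, Pi.smul_apply, smul_eq_mul, sum_mul, Pi.zero_apply]
      rw [← this]
      exact sum_congr rfl fun S _ => sum_congr rfl fun k _ => by ring
  exact Fintype.linearIndependent_iff.1 (hy S) (c ⟨S, ·⟩)
    (funext fun i => by simpa using hcoord i S) k

lemma span_range_eq_top_of_linearIndependent {ι P : Type*} [Fintype ι] {g : ι → P → K}
    (hg : LinearIndependent K g) : Submodule.span K (Set.range fun p i => g i p) = ⊤ := by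
  classical
  rw [← Submodule.dualAnnihilator_eq_bot_iff, eq_bot_iff]
  intro φ hφ
  rw [Submodule.mem_dualAnnihilator] at hφ
  have hc := Fintype.linearIndependent_iff.1 hg (fun i => φ fun j => if i = j then 1 else 0) <|
    funext fun p => by
      have := hφ _ (Submodule.subset_span ⟨p, rfl⟩)
      rw [LinearMap.pi_apply_eq_sum_univ φ] at this
      simpa [mul_comm] using this
  exact LinearMap.ext fun x => by simp [LinearMap.pi_apply_eq_sum_univ φ x, hc]

lemma exists_linearIndependent_dotProduct_eq_zero {d : ℕ} (X : Submodule K (Fin d → K))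
    (S : Finset (Fin d)) :
    ∃ y : Fin (d - finrank K X - #S) → Fin d → K, LinearIndependent K y ∧
      (∀ k, ∀ i ∈ S, y k i = 0) ∧ ∀ k, ∀ x ∈ X, x ⬝ᵥ y k = 0 := by
  let L : (Fin d → K) →ₗ[K] Dual K X × (S → K) :=
    (X.subtype.dualMap ∘ₗ (dotProductBilin K K).flip).prod
      (LinearMap.pi fun i : S => LinearMap.proj (i : Fin d))
  have hker : d - finrank K X - #S ≤ finrank K (LinearMap.ker L) := by
    have hrange := Submodule.finrank_le (LinearMap.range L)
    have := LinearMap.finrank_range_add_finrank_ker L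
    simp only [finrank_prod, Subspace.dual_finrank_eq, finrank_fintype_fun_eq_card,
      Fintype.card_coe, Fintype.card_fin] at hrange this
    omega
  obtain ⟨y, hy⟩ := exists_linearIndependent_of_le_finrank hker
  have hyL : ∀ k, L (y k) = 0 := fun k => (y k).2
  refine ⟨fun k => y k, hy.map' _ (Submodule.ker_subtype _), fun k i hi => ?_, fun k x hx => ?_⟩
  · exact congrFun (congrArg Prod.snd (hyL k)) ⟨i, hi⟩
  · exact LinearMap.congr_fun (congrArg Prod.fst (hyL k)) ⟨x, hx⟩

end LinearAlgebra

section Walsh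

variable {d : ℕ}

def walsh (S : Finset (Fin d)) (v : Fin d → Bool) : ℝ := ∏ i ∈ S, if v i then -1 else 1

lemma walsh_mul_self (S : Finset (Fin d)) (v : Fin d → Bool) : walsh S v * walsh S v = 1 := by
  rw [walsh, ← prod_mul_distrib]
  exact prod_eq_one fun i _ => by cases v i <;> simp

lemma walsh_update_not_of_mem {S : Finset (Fin d)} {i : Fin d} (hi : i ∈ S) (v : Fin d → Bool) :
    walsh S (update v i (!v i)) = - walsh S v := by
  rw [walsh, walsh, ← mul_prod_erase _ _ hi, ← mul_prod_erase _ _ hi,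
    prod_congr rfl fun j hj => by rw [update_of_ne (ne_of_mem_erase hj)]]
  cases v i <;> simp

lemma walsh_update_not_of_notMem {S : Finset (Fin d)} {i : Fin d} (hi : i ∉ S)
    (v : Fin d → Bool) : walsh S (update v i (!v i)) = walsh S v :=
  prod_congr rfl fun j hj => by rw [update_of_ne (ne_of_mem_of_not_mem hj hi)]

lemma sum_walsh_mul_walsh_of_ne {S T : Finset (Fin d)} (hST : S ≠ T) :
    ∑ v, walsh S v * walsh T v = 0 := by
  obtain ⟨i, hi⟩ : ∃ i, (i ∈ S ∧ i ∉ T) ∨ (i ∈ T ∧ i ∉ S) := by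
    by_contra! h
    exact hST (ext fun i => ⟨fun hS => (h i).1 hS, fun hT => (h i).2 hT⟩)
  have hflip : ∀ v, walsh S (update v i (!v i)) * walsh T (update v i (!v i)) =
      -(walsh S v * walsh T v) := by
    intro v
    rcases hi with ⟨hS, hT⟩ | ⟨hT, hS⟩
    · rw [walsh_update_not_of_mem hS, walsh_update_not_of_notMem hT, neg_mul]
    · rw [walsh_update_not_of_mem hT, walsh_update_not_of_notMem hS, mul_neg]
  have hinv : Involutive fun v : Fin d → Bool => update v i (!v i) := fun v => by simp
  have := Equiv.sum_comp (hinv.toPerm _) fun v => walsh S v * walsh T v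
  simp only [Involutive.coe_toPerm, hflip, sum_neg_distrib] at this
  linarith

lemma linearIndependent_walsh : LinearIndependent ℝ (walsh : Finset (Fin d) → _) := by
  refine LinearMap.BilinForm.linearIndependent_of_iIsOrtho (B := dotProductBilin ℝ ℝ)
    (LinearMap.BilinForm.iIsOrtho_def.2 fun S T hST => sum_walsh_mul_walsh_of_ne hST) fun S => ?_
  simp [dotProduct, walsh_mul_self]

-- On an edge in direction `i` this is `walsh S · * y i`, averaged over the two endpoints to make
-- it symmetric; the endpoints agree whenever `y i ≠ 0`, provided `y` vanishes on `S`.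
noncomputable def walshEdge (S : Finset (Fin d)) (y : Fin d → ℝ) : Sym2 (Fin d → Bool) → ℝ :=
  Sym2.lift ⟨fun u w => ∑ i, if u i ≠ w i then (walsh S u + walsh S w) / 2 * y i else 0,
    fun u w => by simp only [ne_comm, add_comm]⟩

lemma walshEdge_cubeEdge {S : Finset (Fin d)} {y : Fin d → ℝ} (hy : ∀ i ∈ S, y i = 0)
    (v : Fin d → Bool) (i : Fin d) : walshEdge S y (cubeEdge v i) = walsh S v * y i := by
  simp only [cubeEdge, walshEdge, Sym2.lift_mk]
  rw [sum_eq_single i (fun j _ hj => by simp [update_of_ne hj]) (by simp)]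
  by_cases hi : i ∈ S
  · simp [hy i hi]
  · simp [walsh_update_not_of_notMem hi]

end Walsh

theorem stmt10_general (d r : ℕ) (hrd : r ≤ d) (w : ℕ)
    (hw : w = r * 2 ^ (r - 1) +
      ∑ j ∈ Finset.Icc 1 (r - 1), Nat.choose (d - j - 1) (r - j) * j * 2 ^ (j - 1))
    (X : Submodule ℝ (Fin d → ℝ))
    (hdim : Module.finrank ℝ ↥X = d - r) :
    ∃ (F : SimpleGraph (Fin d → Bool)) (f : Sym2 (Fin d → Bool) → (Fin w → ℝ)),
      (WeaklySaturated (cube d) (starGraph (r + 1)) F ∧ F.edgeSet.ncard = w) ∧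
      (∀ (v : Fin d → Bool), ∀ x ∈ X, ∑ i : Fin d, x i • f (cubeEdge v i) = 0) ∧
      Submodule.span ℝ (f '' (cube d).edgeSet) = ⊤ := by
  have hdeficit : deficitSum d r = w := by rw [deficitSum_eq_starSatFormula hrd, starSatFormula_eq, hw]
  obtain ⟨F, hF, hFcard⟩ := exists_reflTransGen_saturationStep_cube hrd
  choose y hy hyS hyX using exists_linearIndependent_dotProduct_eq_zero X
  have hr : d - finrank ℝ X = r := by omega
  let e : ((S : Finset (Fin d)) × Fin (d - finrank ℝ X - #S)) ≃ Fin w :=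
    Fintype.equivFinOfCardEq (by rw [card_sigma_fin_sub_card, hr, hdeficit])
  let g : Fin w → (Fin d → Bool) × Fin d → ℝ := fun m p =>
    walsh (e.symm m).1 p.1 * y (e.symm m).1 (e.symm m).2 p.2
  have hg : LinearIndependent ℝ g :=
    (linearIndependent_sigma_mul linearIndependent_walsh hy).comp _ e.symm.injective
  refine ⟨F, fun ed m => walshEdge (e.symm m).1 (y _ (e.symm m).2) ed,
    ⟨weaklySaturated_of_reflTransGen hF, hFcard.trans hdeficit⟩, fun v x hx => ?_, ?_⟩
  · ext m
    simp only [walshEdge_cubeEdge (hyS _ _), Finset.sum_apply, Pi.smul_apply, smul_eq_mul,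
      Pi.zero_apply, mul_left_comm _ (walsh _ v), ← Finset.mul_sum]
    rw [← dotProduct, hyX _ _ x hx, mul_zero]
  · refine eq_top_mono (Submodule.span_mono ?_) (span_range_eq_top_of_linearIndependent hg)
    rintro _ ⟨⟨v, i⟩, rfl⟩
    exact ⟨cubeEdge v i, cubeEdge_mem_edgeSet v i, funext fun m => walshEdge_cubeEdge (hyS _ _) v i⟩

/-- (Key lemma for the hypercube.) Given a subspace `X ⊆ ℝ^d` of dimension
`d - r` all of whose nonzero vectors have support of size `≥ r + 1`, there are a spanning
subgraph `F` of `Q_d` and vectors `f_e ∈ ℝ^w` satisfying (Q1), (Q2), (Q3). -/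
theorem stmt10 (d r : ℕ) (hrd : r ≤ d) (w : ℕ)
    (hw : w = r * 2 ^ (r - 1) +
      ∑ j ∈ Finset.Icc 1 (r - 1), Nat.choose (d - j - 1) (r - j) * j * 2 ^ (j - 1))
    (X : Submodule ℝ (Fin d → ℝ))
    (hdim : Module.finrank ℝ ↥X = d - r)
    (hsupp : ∀ x ∈ X, x ≠ 0 → r + 1 ≤ {i : Fin d | x i ≠ 0}.ncard) :
    ∃ (F : SimpleGraph (Fin d → Bool)) (f : Sym2 (Fin d → Bool) → (Fin w → ℝ)),
      (WeaklySaturated (cube d) (starGraph (r + 1)) F ∧ F.edgeSet.ncard = w) ∧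
      (∀ (v : Fin d → Bool), ∀ x ∈ X, ∑ i : Fin d, x i • f (cubeEdge v i) = 0) ∧
      Submodule.span ℝ (f '' (cube d).edgeSet) = ⊤ :=
  stmt10_general d r hrd w hw X hdim
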